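/- arXiv:1709.01649 — 2 statements merged into one kernel-verified Lean document; each statement's English description precedes it below -/
import Mathlib

section
/- Let A be a unital C*-algebra, let ψ be a state on A, and let (Δ_n) be a characteristic sequence for ψ. Then lim_{n→∞} ‖Δ_n* a Δ_n‖ = |ψ(a)| for every a ∈ A. -/
open Filter Topology
open scoped ComplexOrder

/-- A state on a unital C⋆-algebra: a positive linear functional of norm one. -/
def IsState {A : Type*} [CStarAlgebra A] (φ : A →L[ℂ] ℂ) : Prop :=
  ‖φ‖ = 1 ∧ ∀ a : A, 0 ≤ φ (star a * a)

/-- A characteristic sequence for a state `ψ`: a sequence of norm-one elements with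
`ψ (Δ n) → 1` and `limsup ‖Δ n⋆ * a * Δ n‖ ≤ |ψ a|` for every `a`. -/
def IsCharacteristicSequence {A : Type*} [CStarAlgebra A] (ψ : A →L[ℂ] ℂ) (Δ : ℕ → A) : Prop :=
  (∀ n, ‖Δ n‖ = 1) ∧ Tendsto (fun n => ψ (Δ n)) atTop (nhds 1) ∧
    ∀ a : A, limsup (fun n => ‖star (Δ n) * a * Δ n‖) atTop ≤ ‖ψ a‖

/-!
Let `ξ` be the class of `1` in the GNS space of `ψ`, so that `ψ (x⋆ * a * y) = ⟪x ξ, a y ξ⟫`.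
Since `‖Δ n ξ‖ ≤ 1`, `‖ξ‖ ≤ 1` and `⟪ξ, Δ n ξ⟫ = ψ (Δ n) → 1`, the vectors `Δ n ξ` converge
to `ξ`, hence `ψ (Δ n⋆ * a * Δ n) = ⟪Δ n ξ, a Δ n ξ⟫ → ⟪ξ, a ξ⟫ = ψ a`. As
`|ψ (Δ n⋆ * a * Δ n)| ≤ ‖Δ n⋆ * a * Δ n‖`, this bounds the norms from below by a sequence
tending to `|ψ a|`, and the limsup hypothesis bounds them from above.
-/

theorem tendsto_of_inner_tendsto_one {𝕜 E ι : Type*} [RCLike 𝕜] [SeminormedAddCommGroup E]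
    [InnerProductSpace 𝕜 E] {l : Filter ι} {x : ι → E} {y : E} (hx : ∀ i, ‖x i‖ ≤ 1)
    (hy : ‖y‖ ≤ 1) (h : Tendsto (fun i => inner 𝕜 y (x i)) l (𝓝 1)) :
    Tendsto x l (𝓝 y) := by
  have hre : Tendsto (fun i => 2 - 2 * RCLike.re (inner 𝕜 y (x i))) l (𝓝 0) := by
    simpa using ((RCLike.continuous_re.tendsto _).comp h).const_mul 2 |>.const_sub 2
  have hsq : Tendsto (fun i => ‖x i - y‖ ^ 2) l (𝓝 0) := by
    refine squeeze_zero (fun _ => by positivity) (fun i => ?_) hre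
    rw [norm_sub_rev, norm_sub_sq (𝕜 := 𝕜)]
    linarith [pow_le_one₀ (n := 2) (norm_nonneg y) hy,
      pow_le_one₀ (n := 2) (norm_nonneg _) (hx i)]
  rw [tendsto_iff_norm_sub_tendsto_zero]
  simpa [Function.comp_def] using (Real.continuous_sqrt.tendsto _).comp hsq

theorem tendsto_of_tendsto_of_le_of_limsup_le {ι : Type*} {l : Filter ι} {u v : ι → ℝ} {c : ℝ}
    (hu : Tendsto u l (𝓝 c)) (huv : ∀ i, u i ≤ v i) (hv : limsup v l ≤ c)
    (hv_bdd : IsBoundedUnder (· ≤ ·) l v) : Tendsto v l (𝓝 c) :=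
  tendsto_order.2
    ⟨fun b hb => ((tendsto_order.1 hu).1 b hb).mono fun i hi => hi.trans_le (huv i),
      fun _ hb => eventually_lt_of_limsup_lt (hv.trans_lt hb) hv_bdd⟩

namespace PositiveLinearMap

variable {A : Type*} [CStarAlgebra A] [PartialOrder A] [StarOrderedRing A] (f : A →ₚ[ℂ] ℂ)

theorem apply_star_mul_mul_eq_inner (x a y : A) :
    f (star x * a * y) = inner ℂ (f.toPreGNS x) (f.leftMulMapPreGNS a (f.toPreGNS y)) := by
  rw [preGNS_inner_def, mul_assoc]
  rfl

variable {f}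

theorem norm_toPreGNS_le (hf : ∀ b, ‖f b‖ ≤ ‖b‖) (a : A) : ‖f.toPreGNS a‖ ≤ ‖a‖ := by
  rw [preGNS_norm_def, Real.sqrt_le_left (norm_nonneg a), sq, ← CStarRing.norm_star_mul_self]
  exact (RCLike.re_le_norm _).trans (hf _)

theorem tendsto_apply_star_mul_mul {ι : Type*} {l : Filter ι} (hf : ∀ b, ‖f b‖ ≤ ‖b‖)
    {Δ : ι → A} (hΔ : ∀ i, ‖Δ i‖ ≤ 1) (h1 : Tendsto (fun i => f (Δ i)) l (𝓝 1)) (a : A) :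
    Tendsto (fun i => f (star (Δ i) * a * Δ i)) l (𝓝 (f a)) := by
  have hconv : Tendsto (fun i => f.toPreGNS (Δ i)) l (𝓝 (f.toPreGNS 1)) := by
    refine tendsto_of_inner_tendsto_one (𝕜 := ℂ)
      (fun i => (norm_toPreGNS_le hf _).trans (hΔ i)) ?_ ?_
    · refine (norm_toPreGNS_le hf 1).trans ?_
      nontriviality A
      exact CStarRing.norm_one.le
    · simpa [preGNS_inner_def] using h1
  have := hconv.inner (𝕜 := ℂ) ((f.leftMulMapPreGNS a).continuous.tendsto _ |>.comp hconv)
  simpa only [Function.comp_apply, ← apply_star_mul_mul_eq_inner, star_one, one_mul, mul_one]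
    using this

end PositiveLinearMap

namespace IsState

variable {A : Type*} [CStarAlgebra A] {ψ : A →L[ℂ] ℂ}

theorem norm_apply_le (hψ : IsState ψ) (a : A) : ‖ψ a‖ ≤ ‖a‖ := by
  simpa [hψ.1] using ψ.le_opNorm a

section SpectralOrder

attribute [local instance] CStarAlgebra.spectralOrder CStarAlgebra.spectralOrderedRing

/-- `A` carries no global order; in the spectral order the nonnegative elements are exactly the
`star b * b`, so a state is a positive linear map. -/
noncomputable def toPositiveLinearMap (hψ : IsState ψ) : A →ₚ[ℂ] ℂ :=
  PositiveLinearMap.mk₀ ψ.toLinearMap fun x hx => by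
    obtain ⟨b, rfl⟩ := CStarAlgebra.nonneg_iff_eq_star_mul_self.mp hx
    exact hψ.2 b

theorem tendsto_apply_star_mul_mul (hψ : IsState ψ) {ι : Type*} {l : Filter ι} {Δ : ι → A}
    (hΔ : ∀ i, ‖Δ i‖ ≤ 1) (h1 : Tendsto (fun i => ψ (Δ i)) l (𝓝 1)) (a : A) :
    Tendsto (fun i => ψ (star (Δ i) * a * Δ i)) l (𝓝 (ψ a)) :=
  hψ.toPositiveLinearMap.tendsto_apply_star_mul_mul hψ.norm_apply_le hΔ h1 a

end SpectralOrder

end IsState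

theorem norm_star_mul_mul_le {A : Type*} [CStarAlgebra A] {x : A} (hx : ‖x‖ ≤ 1) (a : A) :
    ‖star x * a * x‖ ≤ ‖a‖ :=
  calc ‖star x * a * x‖ ≤ ‖star x‖ * ‖a‖ * ‖x‖ := norm_mul₃_le
    _ ≤ 1 * ‖a‖ * 1 := by rw [norm_star]; gcongr
    _ = ‖a‖ := by ring

/-- if `(Δ n)` is a characteristic sequence for the state `ψ`, then
`‖Δ n⋆ * a * Δ n‖ → |ψ a|` for every `a`. -/
theorem stmt5 {A : Type*} [CStarAlgebra A]
    (ψ : A →L[ℂ] ℂ) (hψ : IsState ψ) (Δ : ℕ → A) (hΔ : IsCharacteristicSequence ψ Δ) :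
    ∀ a : A, Tendsto (fun n => ‖star (Δ n) * a * Δ n‖) atTop (nhds (‖ψ a‖)) := by
  obtain ⟨hnorm, h1, hlimsup⟩ := hΔ
  have hle : ∀ n, ‖Δ n‖ ≤ 1 := fun n => (hnorm n).le
  intro a
  exact tendsto_of_tendsto_of_le_of_limsup_le
    (hψ.tendsto_apply_star_mul_mul hle h1 a).norm (fun n => hψ.norm_apply_le _) (hlimsup a)
    (isBoundedUnder_of ⟨‖a‖, fun n => norm_star_mul_mul_le (hle n) a⟩)
end

section
/- Let A be a unital C*-algebra and let ψ be a state on A admitting a characteristic sequence. Then ψ is a pure state. -/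
open Filter Topology
open scoped ComplexOrder

/-- A pure state: an extreme point of the state space. -/
def IsPureState {A : Type*} [CStarAlgebra A] (ψ : A →L[ℂ] ℂ) : Prop :=
  IsState ψ ∧ ∀ (φ₁ φ₂ : A →L[ℂ] ℂ) (t : ℝ), IsState φ₁ → IsState φ₂ →
    0 < t → t < 1 → ψ = (t : ℂ) • φ₁ + ((1 - t : ℝ) : ℂ) • φ₂ → φ₁ = ψ ∧ φ₂ = ψ

/-!
Write `ψ = t φ₁ + (1 - t) φ₂` with states `φᵢ`. Since `Re φᵢ (Δ n) ≤ 1` and `Re ψ (Δ n) → 1`,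
also `φᵢ (Δ n) → 1`. For such a state `φ`, the GNS semi-norm of `1 - Δ n` satisfies
`‖1 - Δ n‖² ≤ 2 - 2 Re φ (Δ n) → 0`, and Cauchy–Schwarz applied to
`a - Δ n⋆ a Δ n = (1 - Δ n)⋆ a + (a⋆ Δ n)⋆ (1 - Δ n)` gives `φ (Δ n⋆ a Δ n) → φ a`. Hence
`‖φ a‖ ≤ limsup ‖Δ n⋆ a Δ n‖ ≤ ‖ψ a‖`, so `ker ψ ≤ ker φ`; as both functionals tend to `1`
along `Δ`, they coincide.
-/

open scoped InnerProductSpace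

theorem tendsto_of_weighted_add_tendsto_one {ι : Type*} {l : Filter ι} {u w : ι → ℝ} {s t : ℝ}
    (hs : 0 < s) (ht : 0 ≤ t) (hst : s + t = 1) (hu : ∀ i, u i ≤ 1) (hw : ∀ i, w i ≤ 1)
    (h : Tendsto (fun i => s * u i + t * w i) l (𝓝 1)) : Tendsto u l (𝓝 1) := by
  have hlow : Tendsto (fun i => (s * u i + t * w i - t) / s) l (𝓝 1) := by
    simpa [← hst, hs.ne'] using (h.sub_const t).div_const s
  refine tendsto_of_tendsto_of_tendsto_of_le_of_le hlow tendsto_const_nhds (fun i => ?_) hu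
  rw [div_le_iff₀ hs]
  nlinarith [hw i]

theorem Complex.tendsto_one_of_re_tendsto_one {ι : Type*} {l : Filter ι} {z : ι → ℂ}
    (hz : ∀ i, ‖z i‖ ≤ 1) (hre : Tendsto (fun i => (z i).re) l (𝓝 1)) :
    Tendsto z l (𝓝 1) := by
  have hdist (i : ι) : ‖z i - 1‖ ≤ √(2 - 2 * (z i).re) := by
    refine Real.le_sqrt_of_sq_le ?_
    have h1 : ‖z i - 1‖ ^ 2 = ‖z i‖ ^ 2 - 2 * (z i).re + 1 := by
      simp only [Complex.sq_norm, Complex.normSq_apply, Complex.sub_re, Complex.sub_im,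
        Complex.one_re, Complex.one_im]
      ring
    nlinarith [hz i, norm_nonneg (z i)]
  have hlim : Tendsto (fun i => √(2 - 2 * (z i).re)) l (𝓝 0) := by
    simpa using ((hre.const_mul 2).const_sub 2).sqrt
  exact tendsto_iff_norm_sub_tendsto_zero.mpr (squeeze_zero (fun _ => norm_nonneg _) hdist hlim)

theorem LinearMap.eq_of_ker_le_of_tendsto {R E ι : Type*} [CommRing R] [TopologicalSpace R]
    [ContinuousMul R] [T2Space R] [AddCommGroup E] [Module R E] {f g : E →ₗ[R] R}
    (hker : LinearMap.ker g ≤ LinearMap.ker f) {l : Filter ι} [l.NeBot] {x : ι → E}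
    (hf : Tendsto (fun i => f (x i)) l (𝓝 1)) (hg : Tendsto (fun i => g (x i)) l (𝓝 1)) :
    f = g := by
  ext a
  have hcomm (i : ι) : g (x i) * f a = g a * f (x i) := by
    have : g (g (x i) • a - g a • x i) = 0 := by simp [mul_comm]
    simpa [sub_eq_zero] using hker this
  have := tendsto_nhds_unique ((hg.mul_const (f a)).congr hcomm) (hf.const_mul (g a))
  simpa using this

theorem IsState.norm_apply_le_s7 {A : Type*} [CStarAlgebra A] {φ : A →L[ℂ] ℂ} (hφ : IsState φ)
    (a : A) : ‖φ a‖ ≤ ‖a‖ := by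
  simpa [hφ.1] using φ.le_opNorm a

theorem CStarRing.norm_one_le {E : Type*} [NormedRing E] [StarRing E] [CStarRing E] :
    ‖(1 : E)‖ ≤ 1 := by
  have h : ‖(1 : E)‖ * ‖(1 : E)‖ = ‖(1 : E)‖ := by
    simpa using (CStarRing.norm_star_mul_self (x := (1 : E))).symm
  nlinarith [norm_nonneg (1 : E)]

section GNS

variable {A : Type*} [CStarAlgebra A] {φ : A →L[ℂ] ℂ}

attribute [local instance] CStarAlgebra.spectralOrder CStarAlgebra.spectralOrderedRing

/- A `CStarAlgebra` carries no order instance. For the spectral order the nonnegative elements are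
exactly the `star b * b`, so `φ` becomes a positive linear map and Mathlib's GNS space applies. -/
noncomputable def positiveLinearMapOfNonneg (φ : A →L[ℂ] ℂ) (hφ : ∀ a, 0 ≤ φ (star a * a)) :
    A →ₚ[ℂ] ℂ :=
  .mk₀ φ fun x hx => by
    obtain ⟨b, rfl⟩ := CStarAlgebra.nonneg_iff_eq_star_mul_self.mp hx
    exact hφ b

noncomputable def gnsVec (hφ : ∀ a, 0 ≤ φ (star a * a)) :
    A →ₗ[ℂ] (positiveLinearMapOfNonneg φ hφ).PreGNS :=
  (positiveLinearMapOfNonneg φ hφ).toPreGNS.toLinearMap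

theorem inner_gnsVec (hφ : ∀ a, 0 ≤ φ (star a * a)) (a b : A) :
    ⟪gnsVec hφ a, gnsVec hφ b⟫_ℂ = φ (star a * b) :=
  rfl

theorem norm_gnsVec_le (hφ : ∀ a, 0 ≤ φ (star a * a)) (hφ₁ : ‖φ‖ ≤ 1) (a : A) :
    ‖gnsVec hφ a‖ ≤ ‖a‖ := by
  have h : ‖gnsVec hφ a‖ ^ 2 ≤ ‖a‖ ^ 2 :=
    calc ‖gnsVec hφ a‖ ^ 2 = (φ (star a * a)).re := by
          rw [← inner_gnsVec hφ]
          exact (inner_self_eq_norm_sq (𝕜 := ℂ) _).symm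
      _ ≤ ‖φ (star a * a)‖ := Complex.re_le_norm _
      _ ≤ ‖φ‖ * ‖star a * a‖ := φ.le_opNorm _
      _ ≤ ‖a‖ ^ 2 := by
        rw [CStarRing.norm_star_mul_self, ← sq]
        exact mul_le_of_le_one_left (by positivity) hφ₁
  exact (sq_le_sq₀ (norm_nonneg _) (norm_nonneg _)).mp h

theorem norm_gnsVec_one_sub_sq_le (hφ : ∀ a, 0 ≤ φ (star a * a)) (hφ₁ : ‖φ‖ ≤ 1) {d : A}
    (hd : ‖d‖ ≤ 1) : ‖gnsVec hφ (1 - d)‖ ^ 2 ≤ 2 - 2 * (φ d).re := by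
  have h1 := (norm_gnsVec_le hφ hφ₁ 1).trans CStarRing.norm_one_le
  have hd' := (norm_gnsVec_le hφ hφ₁ d).trans hd
  rw [map_sub, norm_sub_sq (𝕜 := ℂ), inner_gnsVec, star_one, one_mul, RCLike.re_to_complex]
  nlinarith [norm_nonneg (gnsVec hφ 1), norm_nonneg (gnsVec hφ d)]

theorem norm_apply_sub_apply_star_mul_mul_le (hφ : ∀ a, 0 ≤ φ (star a * a)) (hφ₁ : ‖φ‖ ≤ 1)
    {d : A} (hd : ‖d‖ ≤ 1) (a : A) :
    ‖φ a - φ (star d * a * d)‖ ≤ 2 * ‖a‖ * ‖gnsVec hφ (1 - d)‖ := by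
  have hsplit : a - star d * a * d = star (1 - d) * a + star (star a * d) * (1 - d) := by
    simp only [star_sub, star_one, star_mul, star_star]
    noncomm_ring
  have had : ‖star a * d‖ ≤ ‖a‖ := by
    simpa using norm_mul_le_of_le (norm_star a).le hd
  rw [← map_sub, hsplit, map_add, ← inner_gnsVec hφ, ← inner_gnsVec hφ]
  calc _ ≤ ‖gnsVec hφ (1 - d)‖ * ‖gnsVec hφ a‖
          + ‖gnsVec hφ (star a * d)‖ * ‖gnsVec hφ (1 - d)‖ :=
        (norm_add_le _ _).trans (add_le_add (norm_inner_le_norm _ _) (norm_inner_le_norm _ _))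
    _ ≤ ‖gnsVec hφ (1 - d)‖ * ‖a‖ + ‖a‖ * ‖gnsVec hφ (1 - d)‖ := by
        gcongr
        · exact norm_gnsVec_le hφ hφ₁ a
        · exact (norm_gnsVec_le hφ hφ₁ _).trans had
    _ = 2 * ‖a‖ * ‖gnsVec hφ (1 - d)‖ := by ring

theorem tendsto_apply_star_mul_mul (hφ : ∀ a, 0 ≤ φ (star a * a)) (hφ₁ : ‖φ‖ ≤ 1)
    {ι : Type*} {l : Filter ι} {d : ι → A} (hd : ∀ i, ‖d i‖ ≤ 1)
    (hre : Tendsto (fun i => (φ (d i)).re) l (𝓝 1)) (a : A) :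
    Tendsto (fun i => φ (star (d i) * a * d i)) l (𝓝 (φ a)) := by
  have hvec : Tendsto (fun i => ‖gnsVec hφ (1 - d i)‖) l (𝓝 0) := by
    have hsqrt : Tendsto (fun i => √(2 - 2 * (φ (d i)).re)) l (𝓝 0) := by
      simpa using ((hre.const_mul 2).const_sub 2).sqrt
    exact squeeze_zero (fun _ => norm_nonneg _)
      (fun i => Real.le_sqrt_of_sq_le (norm_gnsVec_one_sub_sq_le hφ hφ₁ (hd i))) hsqrt
  rw [tendsto_iff_norm_sub_tendsto_zero]
  refine squeeze_zero (fun _ => norm_nonneg _) (fun i => ?_)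
    (by simpa using hvec.const_mul (2 * ‖a‖))
  rw [norm_sub_rev]
  exact norm_apply_sub_apply_star_mul_mul_le hφ hφ₁ (hd i) a

end GNS

namespace IsCharacteristicSequence

variable {A : Type*} [CStarAlgebra A] {ψ φ : A →L[ℂ] ℂ} {Δ : ℕ → A}

theorem norm_apply_le_s7 (hΔ : IsCharacteristicSequence ψ Δ) (hφ : IsState φ)
    (hre : Tendsto (fun n => (φ (Δ n)).re) atTop (𝓝 1)) (a : A) : ‖φ a‖ ≤ ‖ψ a‖ := by
  have hlim := (tendsto_apply_star_mul_mul hφ.2 hφ.1.le (fun n => (hΔ.1 n).le) hre a).norm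
  have hbdd (n : ℕ) : ‖star (Δ n) * a * Δ n‖ ≤ ‖a‖ := by
    simpa [hΔ.1 n] using norm_mul₃_le (a := star (Δ n)) (b := a) (c := Δ n)
  calc ‖φ a‖ = limsup (fun n => ‖φ (star (Δ n) * a * Δ n)‖) atTop := hlim.limsup_eq.symm
    _ ≤ limsup (fun n => ‖star (Δ n) * a * Δ n‖) atTop :=
        limsup_le_limsup (.of_forall fun n => hφ.norm_apply_le_s7 _) hlim.isCoboundedUnder_le
          (isBoundedUnder_of ⟨‖a‖, hbdd⟩)
    _ ≤ ‖ψ a‖ := hΔ.2.2 a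

theorem eq_of_isState (hΔ : IsCharacteristicSequence ψ Δ) (hφ : IsState φ)
    (hre : Tendsto (fun n => (φ (Δ n)).re) atTop (𝓝 1)) : φ = ψ := by
  have hφΔ : Tendsto (fun n => φ (Δ n)) atTop (𝓝 1) :=
    Complex.tendsto_one_of_re_tendsto_one (fun n => (hφ.norm_apply_le_s7 _).trans (hΔ.1 n).le) hre
  refine ContinuousLinearMap.coe_injective
    (LinearMap.eq_of_ker_le_of_tendsto (fun a ha => ?_) hφΔ hΔ.2.1)
  have hψa : ψ a = 0 := ha
  show φ a = 0
  simpa [hψa] using hΔ.norm_apply_le_s7 hφ hre a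

end IsCharacteristicSequence

/-- a state admitting a characteristic sequence is pure. -/
theorem stmt7 {A : Type*} [CStarAlgebra A]
    (ψ : A →L[ℂ] ℂ) (hψ : IsState ψ) (Δ : ℕ → A) (hΔ : IsCharacteristicSequence ψ Δ) :
    IsPureState ψ := by
  refine ⟨hψ, fun φ₁ φ₂ t h₁ h₂ ht₀ ht₁ hψeq => ?_⟩
  have hre_le {φ : A →L[ℂ] ℂ} (hφ : IsState φ) (n : ℕ) : (φ (Δ n)).re ≤ 1 :=
    (Complex.re_le_norm _).trans ((hφ.norm_apply_le_s7 _).trans (hΔ.1 n).le)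
  have hmix : Tendsto (fun n => t * (φ₁ (Δ n)).re + (1 - t) * (φ₂ (Δ n)).re) atTop (𝓝 1) := by
    have h := (Complex.continuous_re.tendsto 1).comp hΔ.2.1
    simpa only [hψeq, Function.comp_def, add_apply, smul_apply, smul_eq_mul, Complex.add_re,
      Complex.re_ofReal_mul, Complex.one_re] using h
  refine ⟨hΔ.eq_of_isState h₁ ?_, hΔ.eq_of_isState h₂ ?_⟩
  · exact tendsto_of_weighted_add_tendsto_one (s := t) (t := 1 - t) ht₀ (by linarith) (by ring)
      (hre_le h₁) (hre_le h₂) hmix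
  · refine tendsto_of_weighted_add_tendsto_one (s := 1 - t) (t := t) (by linarith) ht₀.le
      (by ring) (hre_le h₂) (hre_le h₁) ?_
    simpa only [add_comm] using hmix
end
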